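/- arXiv:1603.09471 — 3 statements merged into one kernel-verified Lean document; each statement's English description precedes it below -/
import Mathlib

section
/- Let 0 < α < 1, let λ ∈ ℝ with λ ≠ 1/(1-α), and let f : [0,∞) → ℝ be continuous with f(0) = 0. If u is continuously differentiable on [0,∞), satisfies u(0) = 0, and satisfies (_CF D₀ᵗ^α u)(t) − λ·u(t) = f(t) for all t ≥ 0, then u(t) = ((1-α)/(1-λ(1-α)))·f(t) + (α/(1-λ(1-α))²)·∫₀ᵗ f(ξ)·exp( (λα/(1-λ(1-α)))·(t-ξ) ) dξ for all t ≥ 0; in particular the solution of this initial value problem is unique. -/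
/-!
Write `β = α / (1 - α)` and `w(t) = ∫₀ᵗ u(s) e^{-β(t-s)} ds`. Integrating by parts against the
exponential kernel (using `u 0 = 0`) gives `(1 - α) · CF D^α u = u - β w`, so the equation says
`c u = (1 - α) f + β w` with `c = 1 - λ(1 - α) ≠ 0`. Since `w' = u - β w`, the convolution `w`
solves the linear equation `w' = (λα / c) w + ((1 - α) / c) f` with `w 0 = 0`; variation of
constants gives `w` explicitly, and substituting back yields `u`.
-/

/-- The Caputo–Fabrizio fractional derivative of order `α` with base point `0`. -/
noncomputable def cfDeriv (α : ℝ) (u : ℝ → ℝ) (t : ℝ) : ℝ :=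
  (1 / (1 - α)) * ∫ s in (0:ℝ)..t, deriv u s * Real.exp (-(α / (1 - α)) * (t - s))

open intervalIntegral MeasureTheory Real Set

noncomputable def expConv (r : ℝ) (g : ℝ → ℝ) (a t : ℝ) : ℝ :=
  ∫ s in a..t, g s * exp (r * (t - s))

section expConv

variable {r a b : ℝ} {g : ℝ → ℝ}

theorem expConv_self (r : ℝ) (g : ℝ → ℝ) (a : ℝ) : expConv r g a a = 0 :=
  integral_same

theorem expConv_eq_exp_mul_integral (r : ℝ) (g : ℝ → ℝ) (a t : ℝ) :
    expConv r g a t = exp (r * t) * ∫ s in a..t, g s * exp (-(r * s)) := by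
  rw [expConv, ← intervalIntegral.integral_const_mul]
  refine integral_congr fun s _ => ?_
  rw [mul_sub, sub_eq_add_neg, exp_add]
  ring

theorem continuousOn_expConv (hab : a ≤ b) (hg : ContinuousOn g (Icc a b)) :
    ContinuousOn (expConv r g a) (Icc a b) := by
  have hprim : ContinuousOn (fun t => ∫ s in a..t, g s * exp (-(r * s))) (Icc a b) := by
    rw [← uIcc_of_le hab]
    refine continuousOn_primitive_interval (ContinuousOn.integrableOn_compact isCompact_uIcc ?_)
    rw [uIcc_of_le hab]
    exact hg.mul (by fun_prop)
  simp_rw [funext (expConv_eq_exp_mul_integral r g a)]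
  exact (by fun_prop : Continuous fun t => exp (r * t)).continuousOn.mul hprim

theorem hasDerivAt_expConv (hg : ContinuousOn g (Icc a b)) {t : ℝ} (ht : t ∈ Ioo a b) :
    HasDerivAt (expConv r g a) (g t + r * expConv r g a t) t := by
  have hcont : ContinuousOn (fun s => g s * exp (-(r * s))) (Icc a b) := hg.mul (by fun_prop)
  have hprim : HasDerivAt (fun t => ∫ s in a..t, g s * exp (-(r * s)))
      (g t * exp (-(r * t))) t :=
    integral_hasDerivAt_right
      ((hcont.mono (Icc_subset_Icc_right ht.2.le)).intervalIntegrable_of_Icc ht.1.le)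
      ((hcont.mono Ioo_subset_Icc_self).stronglyMeasurableAtFilter isOpen_Ioo t ht)
      (hcont.continuousAt (Icc_mem_nhds ht.1 ht.2))
  have hexp : HasDerivAt (fun t => exp (r * t)) (exp (r * t) * r) t :=
    ((hasDerivAt_id t).const_mul r).exp.congr_deriv (by simp)
  simp_rw [funext (expConv_eq_exp_mul_integral r g a)]
  refine (hexp.mul hprim).congr_deriv ?_
  rw [mul_left_comm (exp (r * t)) (g t), ← exp_add, add_neg_cancel, exp_zero]
  ring

theorem expConv_deriv {u u' : ℝ → ℝ} (hu : ∀ x ∈ uIcc a b, HasDerivAt u (u' x) x)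
    (hu' : IntervalIntegrable u' volume a b) :
    expConv r (deriv u) a b = u b - exp (r * (b - a)) * u a + r * expConv r u a b := by
  have hv : ∀ x ∈ uIcc a b, HasDerivAt (fun s => exp (r * (b - s))) (-(r * exp (r * (b - x)))) x :=
    fun x _ => (((hasDerivAt_id x).const_sub b).const_mul r).exp.congr_deriv (by simp; ring)
  have parts := integral_mul_deriv_eq_deriv_mul hu hv hu'
    ((by fun_prop : Continuous fun x => -(r * exp (r * (b - x)))).intervalIntegrable a b)
  have hderiv : expConv r (deriv u) a b = ∫ x in a..b, u' x * exp (r * (b - x)) :=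
    integral_congr fun x hx => by rw [(hu x hx).deriv]
  have hkernel : ∫ x in a..b, u x * -(r * exp (r * (b - x))) = -(r * expConv r u a b) := by
    rw [expConv, ← intervalIntegral.integral_const_mul, ← intervalIntegral.integral_neg]
    exact integral_congr fun x _ => by ring
  rw [hkernel, sub_self, mul_zero, exp_zero, mul_one] at parts
  rw [hderiv]
  linarith

theorem eq_exp_mul_add_expConv_of_hasDerivAt {μ : ℝ} {w : ℝ → ℝ} (hab : a ≤ b)
    (hw : ContinuousOn w (Icc a b)) (hderiv : ∀ x ∈ Ioo a b, HasDerivAt w (μ * w x + g x) x)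
    (hg : IntervalIntegrable g volume a b) :
    w b = exp (μ * (b - a)) * w a + expConv μ g a b := by
  have hkernel : ∀ x, HasDerivAt (fun s => exp (μ * (b - s))) (-(μ * exp (μ * (b - x)))) x :=
    fun x => (((hasDerivAt_id x).const_sub b).const_mul μ).exp.congr_deriv (by simp; ring)
  have hftc := integral_eq_sub_of_hasDerivAt_of_le hab
    (f := fun x => exp (μ * (b - x)) * w x) (f' := fun x => g x * exp (μ * (b - x)))
    ((by fun_prop : Continuous fun x => exp (μ * (b - x))).continuousOn.mul hw)
    (fun x hx => ((hkernel x).mul (hderiv x hx)).congr_deriv (by ring))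
    (hg.mul_continuousOn (by fun_prop))
  rw [expConv, hftc, sub_self, mul_zero, exp_zero, one_mul]
  ring

end expConv

theorem one_sub_mul_cfDeriv {α t : ℝ} {u u' : ℝ → ℝ} (hα : α ≠ 1)
    (hu : ∀ x ∈ uIcc 0 t, HasDerivAt u (u' x) x) (hu' : IntervalIntegrable u' volume 0 t) :
    (1 - α) * cfDeriv α u t =
      u t - exp (-(α / (1 - α)) * t) * u 0 - α / (1 - α) * expConv (-(α / (1 - α))) u 0 t := by
  rw [cfDeriv, ← mul_assoc, mul_one_div_cancel (sub_ne_zero.2 hα.symm), one_mul]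
  exact (expConv_deriv hu hu').trans (by rw [sub_zero]; ring)

theorem stmt1_general (α l : ℝ) (hα1 : α < 1) (hl : l ≠ 1 / (1 - α))
    (f : ℝ → ℝ) (hf : ContinuousOn f (Set.Ici 0))
    (u u' : ℝ → ℝ)
    (hu : ∀ t ∈ Set.Ici (0:ℝ), HasDerivAt u (u' t) t)
    (hu' : ContinuousOn u' (Set.Ici 0))
    (hu0 : u 0 = 0)
    (hueq : ∀ t : ℝ, 0 ≤ t → cfDeriv α u t - l * u t = f t) :
    ∀ t : ℝ, 0 ≤ t →
      u t = ((1 - α) / (1 - l * (1 - α))) * f t +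
        (α / (1 - l * (1 - α)) ^ 2) *
          ∫ ξ in (0:ℝ)..t, f ξ * Real.exp ((l * α / (1 - l * (1 - α))) * (t - ξ)) := by
  intro T hT
  have h1α : 1 - α ≠ 0 := sub_ne_zero.2 hα1.ne'
  have hc : 1 - l * (1 - α) ≠ 0 := fun h => hl (by field_simp; linarith)
  set β := α / (1 - α) with hβ
  have hβα : β * (1 - α) = α := div_mul_cancel₀ α h1α
  clear_value β
  set c := 1 - l * (1 - α) with hc_def
  clear_value c
  have hu_cont : ContinuousOn u (Icc 0 T) := fun t ht =>
    (hu t ht.1).continuousAt.continuousWithinAt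
  have hvolterra : ∀ t ∈ Icc 0 T, c * u t = (1 - α) * f t + β * expConv (-β) u 0 t := by
    rintro t ⟨ht, -⟩
    have hsub : uIcc 0 t ⊆ Ici 0 := by rw [uIcc_of_le ht]; exact Icc_subset_Ici_self
    have hcf := one_sub_mul_cfDeriv hα1.ne (fun x hx => hu x (hsub hx))
      (hu'.mono hsub).intervalIntegrable
    rw [← hβ, hu0, mul_zero, sub_zero] at hcf
    linear_combination (1 - α) * hueq t ht - hcf + u t * hc_def
  have hode : ∀ t ∈ Ioo 0 T, HasDerivAt (expConv (-β) u 0)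
      (l * α / c * expConv (-β) u 0 t + (1 - α) / c * f t) t := by
    intro t ht
    refine (hasDerivAt_expConv hu_cont ht).congr_deriv ?_
    rw [div_mul_eq_mul_div, div_mul_eq_mul_div, ← add_div, eq_div_iff hc]
    linear_combination hvolterra t (Ioo_subset_Icc_self ht) + l * expConv (-β) u 0 t * hβα
      - β * expConv (-β) u 0 t * hc_def
  have hsol : expConv (-β) u 0 T =
      (1 - α) / c * ∫ ξ in (0:ℝ)..T, f ξ * exp (l * α / c * (T - ξ)) := by
    rw [eq_exp_mul_add_expConv_of_hasDerivAt hT (continuousOn_expConv hT hu_cont) hode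
      (((hf.mono Icc_subset_Ici_self).intervalIntegrable_of_Icc hT).const_mul _),
      expConv_self, mul_zero, zero_add, expConv]
    simp only [mul_assoc, intervalIntegral.integral_const_mul]
  have hv := hvolterra T (right_mem_Icc.2 hT)
  rw [hsol] at hv
  generalize ∫ ξ in (0:ℝ)..T, f ξ * exp (l * α / c * (T - ξ)) = I at hv ⊢
  field_simp at hv ⊢
  linear_combination hv + I * hβα

theorem stmt1 (α l : ℝ) (hα0 : 0 < α) (hα1 : α < 1) (hl : l ≠ 1 / (1 - α))
    (f : ℝ → ℝ) (hf : ContinuousOn f (Set.Ici 0)) (hf0 : f 0 = 0)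
    (u u' : ℝ → ℝ)
    (hu : ∀ t ∈ Set.Ici (0:ℝ), HasDerivAt u (u' t) t)
    (hu' : ContinuousOn u' (Set.Ici 0))
    (hu0 : u 0 = 0)
    (hueq : ∀ t : ℝ, 0 ≤ t → cfDeriv α u t - l * u t = f t) :
    ∀ t : ℝ, 0 ≤ t →
      u t = ((1 - α) / (1 - l * (1 - α))) * f t +
        (α / (1 - l * (1 - α)) ^ 2) *
          ∫ ξ in (0:ℝ)..t, f ξ * Real.exp ((l * α / (1 - l * (1 - α))) * (t - ξ)) :=
  stmt1_general α l hα1 hl f hf u u' hu hu' hu0 hueq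
end

section
/- Let 0 < α < 1, let λ = 1/(1-α), and let f : [0,∞) → ℝ be continuously differentiable with f(0) = 0 and f′(0) = 0. If u is continuously differentiable on [0,∞), satisfies u(0) = 0, and satisfies (_CF D₀ᵗ^α u)(t) − λ·u(t) = f(t) for all t ≥ 0, then u(t) = −(1-α)·f(t) − ((1-α)²/α)·f′(t) for all t ≥ 0; in particular the solution of this initial value problem is unique. -/
open Real Set

theorem hasDerivWithinAt_integral_Ici {g : ℝ → ℝ} {a t : ℝ} (hg : ContinuousOn g (Ici a))
    (ht : t ∈ Ici a) :
    HasDerivWithinAt (fun x => ∫ y in a..x, g y) (g t) (Ici a) t := by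
  set G : ℝ → ℝ := fun x => g (max x a)
  have hG : Continuous G :=
    hg.comp_continuous (continuous_id.max continuous_const) fun x => le_max_right x a
  have hGg : ∀ x ∈ Ici a, G x = g x := fun x hx => by simp only [G, max_eq_left hx.out]
  have hint : ∀ x ∈ Ici a, ∫ y in a..x, G y = ∫ y in a..x, g y := fun x hx =>
    intervalIntegral.integral_congr fun y hy => hGg y (by rw [uIcc_of_le hx.out] at hy; exact hy.1)
  have hderiv := (hG.integral_hasStrictDerivAt a t).hasDerivAt.hasDerivWithinAt (s := Ici a)
  rw [hGg t ht] at hderiv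
  exact hderiv.congr (fun x hx => (hint x hx).symm) (hint t ht).symm

section CaputoFabrizio

variable {α : ℝ} {u u' : ℝ → ℝ}

theorem cfDeriv_eq_exp_mul_integral (hu : ∀ s ∈ Ici (0:ℝ), HasDerivAt u (u' s) s) {t : ℝ}
    (ht : 0 ≤ t) :
    cfDeriv α u t =
      exp (-(α / (1 - α) * t)) / (1 - α) * ∫ s in (0:ℝ)..t, u' s * exp (α / (1 - α) * s) := by
  have hcongr : EqOn (fun s => deriv u s * exp (-(α / (1 - α)) * (t - s)))
      (fun s => exp (-(α / (1 - α) * t)) * (u' s * exp (α / (1 - α) * s))) (uIcc 0 t) := by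
    intro s hs
    rw [uIcc_of_le ht] at hs
    simp only [(hu s hs.1).deriv, show -(α / (1 - α)) * (t - s) = -(α / (1 - α) * t) + α / (1 - α) * s
      by ring, exp_add]
    ring
  rw [cfDeriv, intervalIntegral.integral_congr hcongr, intervalIntegral.integral_const_mul]
  ring

theorem integral_deriv_mul_exp_eq (hα : α ≠ 1) (hu : ∀ s ∈ Ici (0:ℝ), HasDerivAt u (u' s) s)
    {f : ℝ → ℝ} {t : ℝ} (ht : 0 ≤ t) (heq : cfDeriv α u t - 1 / (1 - α) * u t = f t) :
    ∫ s in (0:ℝ)..t, u' s * exp (α / (1 - α) * s) =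
      exp (α / (1 - α) * t) * (u t + (1 - α) * f t) := by
  have h1α : 1 - α ≠ 0 := sub_ne_zero.mpr hα.symm
  rw [← heq, cfDeriv_eq_exp_mul_integral hu ht, exp_neg]
  field_simp
  ring

end CaputoFabrizio

theorem stmt3_general (α l : ℝ) (hα0 : 0 < α) (hα1 : α < 1) (hl : l = 1 / (1 - α))
    (f f' : ℝ → ℝ)
    (hf : ∀ t ∈ Set.Ici (0:ℝ), HasDerivAt f (f' t) t)
    (u u' : ℝ → ℝ)
    (hu : ∀ t ∈ Set.Ici (0:ℝ), HasDerivAt u (u' t) t)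
    (hu' : ContinuousOn u' (Set.Ici 0))
    (hueq : ∀ t : ℝ, 0 ≤ t → cfDeriv α u t - l * u t = f t) :
    ∀ t : ℝ, 0 ≤ t → u t = -(1 - α) * f t - ((1 - α) ^ 2 / α) * f' t := by
  subst hl
  intro t ht
  set k := α / (1 - α)
  have hexp : ∀ s, HasDerivAt (fun x => exp (k * x)) (exp (k * s) * k) s := fun s =>
    ((hasDerivAt_id s).const_mul k).exp.congr_deriv (by simp)
  have hweight : ContinuousOn (fun s => u' s * exp (k * s)) (Ici 0) :=
    hu'.mul (continuous_exp.comp (continuous_const_mul k)).continuousOn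
  -- Both sides of the integrated equation agree on `Ici 0`, hence so do their one-sided derivatives.
  have hlhs := hasDerivWithinAt_integral_Ici hweight ht
  have hrhs := ((hexp t).mul ((hu t ht).add ((hf t ht).const_mul (1 - α)))).hasDerivWithinAt
    (s := Ici 0)
  have hderiv := (uniqueDiffOn_Ici 0 t ht).eq_deriv _ hlhs <| hrhs.congr
    (fun s hs => integral_deriv_mul_exp_eq hα1.ne hu hs (hueq s hs))
    (integral_deriv_mul_exp_eq hα1.ne hu ht (hueq t ht))
  have h1α : 1 - α ≠ 0 := by linarith
  have hkey : α * (u t + (1 - α) * f t) + (1 - α) ^ 2 * f' t = 0 := by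
    simp only [k, Pi.add_apply] at hderiv
    field_simp at hderiv
    linear_combination -hderiv
  field_simp
  linear_combination hkey

theorem stmt3 (α l : ℝ) (hα0 : 0 < α) (hα1 : α < 1) (hl : l = 1 / (1 - α))
    (f f' : ℝ → ℝ)
    (hf : ∀ t ∈ Set.Ici (0:ℝ), HasDerivAt f (f' t) t)
    (hf' : ContinuousOn f' (Set.Ici 0))
    (hf0 : f 0 = 0) (hf'0 : f' 0 = 0)
    (u u' : ℝ → ℝ)
    (hu : ∀ t ∈ Set.Ici (0:ℝ), HasDerivAt u (u' t) t)
    (hu' : ContinuousOn u' (Set.Ici 0))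
    (hu0 : u 0 = 0)
    (hueq : ∀ t : ℝ, 0 ≤ t → cfDeriv α u t - l * u t = f t) :
    ∀ t : ℝ, 0 ≤ t → u t = -(1 - α) * f t - ((1 - α) ^ 2 / α) * f' t :=
  stmt3_general α l hα0 hα1 hl f f' hf u u' hu hu' hueq
end

section
/- For each positive integer k let λ_k = 2kπ, and consider the two systems of functions on [0,1]: X = {1} ∪ {cos(λ_k x) : k ≥ 1} ∪ {x·sin(λ_k x) : k ≥ 1} and Y = {2(1−x)} ∪ {4(1−x)·cos(λ_k x) : k ≥ 1} ∪ {4·sin(λ_k x) : k ≥ 1}. Then X and Y are biorthogonal in L²[0,1]: ∫₀¹ 1·2(1−x) dx = 1; for all k, m ≥ 1, ∫₀¹ cos(λ_k x)·4(1−x)cos(λ_m x) dx = δ_{km} and ∫₀¹ x·sin(λ_k x)·4·sin(λ_m x) dx = δ_{km}; and all the remaining cross pairings have vanishing integral, i.e. ∫₀¹ 1·4(1−x)cos(λ_m x) dx = 0, ∫₀¹ 1·4 sin(λ_m x) dx = 0, ∫₀¹ cos(λ_k x)·2(1−x) dx = 0, ∫₀¹ cos(λ_k x)·4 sin(λ_m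 x) dx = 0, ∫₀¹ x sin(λ_k x)·2(1−x) dx = 0, and ∫₀¹ x sin(λ_k x)·4(1−x)cos(λ_m x) dx = 0. -/
/-!
After the product-to-sum formulas, every pairing becomes a combination of the integrals over
`[0, 1]` of `sin (c x)`, `x (1 - x) sin (c x)`, `x cos (c x)` and `(1 - x) cos (c x)`, with
`c ∈ 2πℤ` (equivalently `cos c = 1`). For such `c` the reflection `x ↦ 1 - x` leaves `cos (c x)`
unchanged and flips the sign of `sin (c x)`: the first two integrals vanish and the last two
agree. The only actual computation is `∫₀¹ x cos (c x) = [c = 0] / 2`, so a pairing equals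
`1` exactly when the frequency difference `2(k - m)π` vanishes.
-/

open Real intervalIntegral

theorem sin_eq_zero_of_cos_eq_one {c : ℝ} (hc : cos c = 1) : sin c = 0 :=
  sin_eq_zero_iff_cos_eq.2 (.inl hc)

theorem cos_add_eq_one_of_cos_eq_one {p q : ℝ} (hp : cos p = 1) (hq : cos q = 1) :
    cos (p + q) = 1 := by
  rw [cos_add, hp, hq, sin_eq_zero_of_cos_eq_one hp]; ring

theorem cos_sub_eq_one_of_cos_eq_one {p q : ℝ} (hp : cos p = 1) (hq : cos q = 1) :
    cos (p - q) = 1 := by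
  rw [cos_sub, hp, hq, sin_eq_zero_of_cos_eq_one hp]; ring

theorem cos_mul_one_sub_of_cos_eq_one {c : ℝ} (hc : cos c = 1) (x : ℝ) :
    cos (c * (1 - x)) = cos (c * x) := by
  rw [mul_one_sub, cos_sub, hc, sin_eq_zero_of_cos_eq_one hc]; ring

theorem sin_mul_one_sub_of_cos_eq_one {c : ℝ} (hc : cos c = 1) (x : ℝ) :
    sin (c * (1 - x)) = -sin (c * x) := by
  rw [mul_one_sub, sin_sub, hc, sin_eq_zero_of_cos_eq_one hc]; ring

theorem integral_unitInterval_eq_zero_of_comp_one_sub {f : ℝ → ℝ} (hf : ∀ x, f (1 - x) = -f x) :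
    ∫ x in (0:ℝ)..1, f x = 0 := by
  have h := integral_comp_sub_left f (a := 0) (b := 1) 1
  simp only [hf, integral_neg, sub_self, sub_zero] at h
  linarith

theorem integral_sin_mul_of_cos_eq_one {c : ℝ} (hc : cos c = 1) :
    ∫ x in (0:ℝ)..1, sin (c * x) = 0 :=
  integral_unitInterval_eq_zero_of_comp_one_sub (sin_mul_one_sub_of_cos_eq_one hc)

theorem integral_mul_one_sub_mul_sin_of_cos_eq_one {c : ℝ} (hc : cos c = 1) :
    ∫ x in (0:ℝ)..1, x * (1 - x) * sin (c * x) = 0 :=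
  integral_unitInterval_eq_zero_of_comp_one_sub fun x => by
    rw [sin_mul_one_sub_of_cos_eq_one hc]; ring

theorem integral_mul_cos_mul_of_cos_eq_one {c : ℝ} (hc : cos c = 1) :
    ∫ x in (0:ℝ)..1, x * cos (c * x) = if c = 0 then 1 / 2 else 0 := by
  split_ifs with h0
  · simp [h0]
  have hderiv : ∀ x, HasDerivAt (fun y => y * sin (c * y) / c + cos (c * y) / c ^ 2)
      (x * cos (c * x)) x := by
    intro x
    have hlin : HasDerivAt (fun y => c * y) c x := by simpa using (hasDerivAt_id x).const_mul c
    refine ((((hasDerivAt_id' x).mul hlin.sin).div_const c).add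
      (hlin.cos.div_const (c ^ 2))).congr_deriv ?_
    field_simp
    ring
  rw [integral_eq_sub_of_hasDerivAt (fun x _ => hderiv x)
    (by apply Continuous.intervalIntegrable; fun_prop)]
  simp [hc, sin_eq_zero_of_cos_eq_one hc]

theorem integral_one_sub_mul_cos_mul_of_cos_eq_one {c : ℝ} (hc : cos c = 1) :
    ∫ x in (0:ℝ)..1, (1 - x) * cos (c * x) = if c = 0 then 1 / 2 else 0 := by
  have h := integral_comp_sub_left (fun x => x * cos (c * x)) (a := 0) (b := 1) 1
  simp only [cos_mul_one_sub_of_cos_eq_one hc, sub_self, sub_zero] at h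
  rw [h, integral_mul_cos_mul_of_cos_eq_one hc]

section ProductToSum

variable {a b p q : ℝ} {w : ℝ → ℝ}

theorem integral_mul_cos_mul_cos (hw : Continuous w) :
    ∫ x in a..b, w x * (cos (p * x) * cos (q * x)) =
      ((∫ x in a..b, w x * cos ((p - q) * x)) + ∫ x in a..b, w x * cos ((p + q) * x)) / 2 := by
  rw [← integral_add (by apply Continuous.intervalIntegrable; fun_prop)
    (by apply Continuous.intervalIntegrable; fun_prop), ← integral_div]
  congr 1; ext x
  rw [sub_mul, add_mul, cos_sub, cos_add]; ring

theorem integral_mul_sin_mul_sin (hw : Continuous w) :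
    ∫ x in a..b, w x * (sin (p * x) * sin (q * x)) =
      ((∫ x in a..b, w x * cos ((p - q) * x)) - ∫ x in a..b, w x * cos ((p + q) * x)) / 2 := by
  rw [← integral_sub (by apply Continuous.intervalIntegrable; fun_prop)
    (by apply Continuous.intervalIntegrable; fun_prop), ← integral_div]
  congr 1; ext x
  rw [sub_mul, add_mul, cos_sub, cos_add]; ring

theorem integral_mul_sin_mul_cos (hw : Continuous w) :
    ∫ x in a..b, w x * (sin (p * x) * cos (q * x)) =
      ((∫ x in a..b, w x * sin ((p + q) * x)) + ∫ x in a..b, w x * sin ((p - q) * x)) / 2 := by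
  rw [← integral_add (by apply Continuous.intervalIntegrable; fun_prop)
    (by apply Continuous.intervalIntegrable; fun_prop), ← integral_div]
  congr 1; ext x
  rw [sub_mul, add_mul, sin_sub, sin_add]; ring

end ProductToSum

section Pairings

variable {p q : ℝ}

theorem integral_cos_mul_four_mul_one_sub_mul_cos (hp : cos p = 1) (hq : cos q = 1)
    (hpq : p + q ≠ 0) :
    ∫ x in (0:ℝ)..1, cos (p * x) * (4 * (1 - x) * cos (q * x)) = if p = q then 1 else 0 := by
  calc _ = 4 * ∫ x in (0:ℝ)..1, (1 - x) * (cos (p * x) * cos (q * x)) := by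
        rw [← integral_const_mul]; congr 1; ext x; ring
    _ = _ := by
        rw [integral_mul_cos_mul_cos (by fun_prop),
          integral_one_sub_mul_cos_mul_of_cos_eq_one (cos_sub_eq_one_of_cos_eq_one hp hq),
          integral_one_sub_mul_cos_mul_of_cos_eq_one (cos_add_eq_one_of_cos_eq_one hp hq),
          if_neg hpq]
        simp only [sub_eq_zero]
        split_ifs <;> norm_num

theorem integral_mul_sin_mul_four_mul_sin (hp : cos p = 1) (hq : cos q = 1) (hpq : p + q ≠ 0) :
    ∫ x in (0:ℝ)..1, x * sin (p * x) * (4 * sin (q * x)) = if p = q then 1 else 0 := by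
  calc _ = 4 * ∫ x in (0:ℝ)..1, x * (sin (p * x) * sin (q * x)) := by
        rw [← integral_const_mul]; congr 1; ext x; ring
    _ = _ := by
        rw [integral_mul_sin_mul_sin (by fun_prop),
          integral_mul_cos_mul_of_cos_eq_one (cos_sub_eq_one_of_cos_eq_one hp hq),
          integral_mul_cos_mul_of_cos_eq_one (cos_add_eq_one_of_cos_eq_one hp hq),
          if_neg hpq]
        simp only [sub_eq_zero]
        split_ifs <;> norm_num

theorem integral_four_mul_one_sub_mul_cos (hq : cos q = 1) (hq0 : q ≠ 0) :
    ∫ x in (0:ℝ)..1, 4 * (1 - x) * cos (q * x) = 0 := by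
  simp_rw [mul_assoc (4 : ℝ), integral_const_mul,
    integral_one_sub_mul_cos_mul_of_cos_eq_one hq, if_neg hq0, mul_zero]

theorem integral_cos_mul_two_mul_one_sub (hp : cos p = 1) (hp0 : p ≠ 0) :
    ∫ x in (0:ℝ)..1, cos (p * x) * (2 * (1 - x)) = 0 := by
  calc _ = 2 * ∫ x in (0:ℝ)..1, (1 - x) * cos (p * x) := by
        rw [← integral_const_mul]; congr 1; ext x; ring
    _ = 0 := by rw [integral_one_sub_mul_cos_mul_of_cos_eq_one hp, if_neg hp0, mul_zero]

theorem integral_mul_sin_mul_two_mul_one_sub (hp : cos p = 1) :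
    ∫ x in (0:ℝ)..1, x * sin (p * x) * (2 * (1 - x)) = 0 := by
  calc _ = 2 * ∫ x in (0:ℝ)..1, x * (1 - x) * sin (p * x) := by
        rw [← integral_const_mul]; congr 1; ext x; ring
    _ = 0 := by rw [integral_mul_one_sub_mul_sin_of_cos_eq_one hp, mul_zero]

theorem integral_cos_mul_four_mul_sin (hp : cos p = 1) (hq : cos q = 1) :
    ∫ x in (0:ℝ)..1, cos (p * x) * (4 * sin (q * x)) = 0 := by
  calc _ = 4 * ∫ x in (0:ℝ)..1, 1 * (sin (q * x) * cos (p * x)) := by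
        rw [← integral_const_mul]; congr 1; ext x; ring
    _ = 0 := by
        rw [integral_mul_sin_mul_cos continuous_const]
        simp only [one_mul, integral_sin_mul_of_cos_eq_one (cos_add_eq_one_of_cos_eq_one hq hp),
          integral_sin_mul_of_cos_eq_one (cos_sub_eq_one_of_cos_eq_one hq hp)]
        norm_num

theorem integral_mul_sin_mul_four_mul_one_sub_mul_cos (hp : cos p = 1) (hq : cos q = 1) :
    ∫ x in (0:ℝ)..1, x * sin (p * x) * (4 * (1 - x) * cos (q * x)) = 0 := by
  calc _ = 4 * ∫ x in (0:ℝ)..1, x * (1 - x) * (sin (p * x) * cos (q * x)) := by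
        rw [← integral_const_mul]; congr 1; ext x; ring
    _ = 0 := by
        rw [integral_mul_sin_mul_cos (by fun_prop),
          integral_mul_one_sub_mul_sin_of_cos_eq_one (cos_add_eq_one_of_cos_eq_one hp hq),
          integral_mul_one_sub_mul_sin_of_cos_eq_one (cos_sub_eq_one_of_cos_eq_one hp hq)]
        norm_num

end Pairings

theorem stmt16 (k m : ℕ) (hk : 1 ≤ k) (hm : 1 ≤ m) :
    (∫ x in (0:ℝ)..1, (1 : ℝ) * (2 * (1 - x))) = 1 ∧
    (∫ x in (0:ℝ)..1,
        Real.cos (2 * (k : ℝ) * π * x) * (4 * (1 - x) * Real.cos (2 * (m : ℝ) * π * x))) =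
      (if k = m then 1 else 0) ∧
    (∫ x in (0:ℝ)..1,
        x * Real.sin (2 * (k : ℝ) * π * x) * (4 * Real.sin (2 * (m : ℝ) * π * x))) =
      (if k = m then 1 else 0) ∧
    (∫ x in (0:ℝ)..1, (1 : ℝ) * (4 * (1 - x) * Real.cos (2 * (m : ℝ) * π * x))) = 0 ∧
    (∫ x in (0:ℝ)..1, (1 : ℝ) * (4 * Real.sin (2 * (m : ℝ) * π * x))) = 0 ∧
    (∫ x in (0:ℝ)..1, Real.cos (2 * (k : ℝ) * π * x) * (2 * (1 - x))) = 0 ∧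
    (∫ x in (0:ℝ)..1,
        Real.cos (2 * (k : ℝ) * π * x) * (4 * Real.sin (2 * (m : ℝ) * π * x))) = 0 ∧
    (∫ x in (0:ℝ)..1, x * Real.sin (2 * (k : ℝ) * π * x) * (2 * (1 - x))) = 0 ∧
    (∫ x in (0:ℝ)..1,
        x * Real.sin (2 * (k : ℝ) * π * x) * (4 * (1 - x) * Real.cos (2 * (m : ℝ) * π * x))) = 0 := by
  have hcos (n : ℕ) : cos (2 * (n : ℝ) * π) = 1 := by
    rw [← cos_nat_mul_two_pi n]; ring_nf
  have hpos {n : ℕ} (hn : 1 ≤ n) : 2 * (n : ℝ) * π ≠ 0 := by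
    have : (0 : ℝ) < n := by exact_mod_cast hn
    positivity
  have hsum : 2 * (k : ℝ) * π + 2 * m * π ≠ 0 := by
    have : (0 : ℝ) < k := by exact_mod_cast hk
    positivity
  have hfreq : 2 * (k : ℝ) * π = 2 * m * π ↔ k = m := by simp [pi_ne_zero]
  refine ⟨?_, ?_, ?_, ?_, ?_, ?_, ?_, ?_, ?_⟩
  · norm_num [integral_const_mul, integral_comp_sub_left (fun x => x)]
  · simp only [integral_cos_mul_four_mul_one_sub_mul_cos (hcos k) (hcos m) hsum, hfreq]
  · simp only [integral_mul_sin_mul_four_mul_sin (hcos k) (hcos m) hsum, hfreq]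
  · simpa only [one_mul] using integral_four_mul_one_sub_mul_cos (hcos m) (hpos hm)
  · simp only [one_mul, integral_const_mul, integral_sin_mul_of_cos_eq_one (hcos m), mul_zero]
  · exact integral_cos_mul_two_mul_one_sub (hcos k) (hpos hk)
  · exact integral_cos_mul_four_mul_sin (hcos k) (hcos m)
  · exact integral_mul_sin_mul_two_mul_one_sub (hcos k)
  · exact integral_mul_sin_mul_four_mul_one_sub_mul_cos (hcos k) (hcos m)
end
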